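/- arXiv:1112.5729 — 10 statements merged into one kernel-verified Lean document; each statement's English description precedes it below -/
import Mathlib

section
/- For any monoid G acting on a set X and any Hausdorff G-topology τ on X, the Zariski G-topology ζ_G is contained in τ, i.e., every ζ_G-open set is τ-open. -/
open Topology

/-- The Zariski `G`-topology on a `G`-act `X`: the topology generated by the subbase
consisting of the sets `{x | f • x ≠ g • x}` for `f g : G` and the sets
`{x | f • x ≠ c}` for `f : G`, `c : X`. -/
def zariskiGTopology (G X : Type*) [Monoid G] [MulAction G X] : TopologicalSpace X :=
  TopologicalSpace.generateFrom
    ({S : Set X | ∃ f g : G, S = {x : X | f • x ≠ g • x}} ∪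
     {S : Set X | ∃ (f : G) (c : X), S = {x : X | f • x ≠ c}})

theorem le_zariskiGTopology {G X : Type*} [Monoid G] [MulAction G X] [t : TopologicalSpace X]
    [T2Space X] [ContinuousConstSMul G X] : t ≤ zariskiGTopology G X := by
  refine le_generateFrom ?_
  rintro S (⟨f, g, rfl⟩ | ⟨f, c, rfl⟩)
  · exact isOpen_ne_fun (continuous_const_smul f) (continuous_const_smul g)
  · exact isOpen_ne_fun (continuous_const_smul f) continuous_const

/-- For any monoid `G` acting on a set `X` and any Hausdorff `G`-topology `τ` on `X`
(i.e. a Hausdorff topology making all the maps `x ↦ g • x` continuous), the Zariski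
`G`-topology is contained in `τ`: every Zariski-open set is `τ`-open. -/
theorem zariskiGTopology_le_of_hausdorff_GTopology (G X : Type*) [Monoid G] [MulAction G X]
    (τ : TopologicalSpace X) (hT2 : @T2Space X τ)
    (hcont : ∀ g : G, Continuous[τ, τ] fun x => g • x) :
    ∀ U : Set X, IsOpen[zariskiGTopology G X] U → IsOpen[τ] U :=
  have : @ContinuousConstSMul G X τ _ := ⟨hcont⟩
  fun U hU => le_zariskiGTopology (G := G) U hU
end

section
/- Let H be a finite group with trivial center, I an arbitrary index set, and G = H^I the product group with pointwise multiplication. Consider the family G_s of all two-sided shifts s_{a,b} : x↦a*x*b for a,b∈G. Then the Zariski topology on G generated by the subbase consisting of the sets {x∈G : a*x*b ≠ a'*x*b'} for a,b,a',b'∈G and the sets {x∈G : a*x*b ≠ c} for a,b,c∈G coincides with the product (Tychonoff) topology on H^I, where each factor H carries the discrete topology. -/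
open Topology


/-- Let `H` be a finite group with trivial center, `I` an arbitrary index set, and
`G = H^I` the product group with pointwise multiplication.  The Zariski topology on `G`
generated by the subbase consisting of the sets `{x | a * x * b ≠ a' * x * b'}` for
`a b a' b' : G` and the sets `{x | a * x * b ≠ c}` for `a b c : G` coincides with the
product (Tychonoff) topology on `H^I`, where each factor `H` carries the discrete
topology. -/
theorem zariski_twoSidedShifts_eq_pi_of_trivial_center (H : Type*) [Group H] [Finite H]
    (hZ : ∀ z : H, (∀ a : H, a * z = z * a) → z = 1) (I : Type*) :
    TopologicalSpace.generateFrom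
      ({S : Set (I → H) | ∃ a b a' b' : I → H, S = {x : I → H | a * x * b ≠ a' * x * b'}} ∪
       {S : Set (I → H) | ∃ a b c : I → H, S = {x : I → H | a * x * b ≠ c}}) =
    @Pi.topologicalSpace I (fun _ => H) (fun _ => ⊥) := by
  classical
  letI tH : TopologicalSpace H := ⊥
  haveI : DiscreteTopology H := ⟨rfl⟩
  set 𝒮 : Set (Set (I → H)) :=
      ({S : Set (I → H) | ∃ a b a' b' : I → H, S = {x : I → H | a * x * b ≠ a' * x * b'}} ∪
       {S : Set (I → H) | ∃ a b c : I → H, S = {x : I → H | a * x * b ≠ c}}) with h𝒮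
  -- fibers are open in the Zariski topology
  have fiber : ∀ (i : I) (h : H),
      IsOpen[TopologicalSpace.generateFrom 𝒮] {x : I → H | x i = h} := by
    intro i h
    letI tG : TopologicalSpace (I → H) := TopologicalSpace.generateFrom 𝒮
    have key : ∀ t : H, ∃ u : H, t ≠ h → u * (h * t⁻¹) ≠ (h * t⁻¹) * u := by
      intro t
      by_cases ht : t = h
      · exact ⟨1, fun h' => absurd ht h'⟩
      · by_contra hc
        push_neg at hc
        have h1 : h * t⁻¹ = 1 := hZ _ (fun a => (hc a).2)
        exact ht (mul_inv_eq_one.mp h1).symm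
    choose u hu using key
    have hVopen : ∀ t : H, IsOpen[TopologicalSpace.generateFrom 𝒮]
        {x : I → H | u t * x i ≠ x i * (t⁻¹ * u t * t)} := by
      intro t
      apply TopologicalSpace.GenerateOpen.basic
      refine Or.inl ⟨Function.update (1 : I → H) i (u t), 1, 1,
        Function.update (1 : I → H) i (t⁻¹ * u t * t), ?_⟩
      ext x
      simp only [Set.mem_setOf_eq, Function.ne_iff, Pi.mul_apply, Pi.one_apply]
      constructor
      · intro hx
        exact ⟨i, by simpa [Function.update_self] using hx⟩
      · rintro ⟨j, hj⟩
        by_cases hji : j = i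
        · subst hji
          simpa [Function.update_self] using hj
        · simp [Function.update_of_ne hji] at hj
    have heq : {x : I → H | x i = h} =
        ⋂ t ∈ ({h}ᶜ : Set H), {x : I → H | u t * x i ≠ x i * (t⁻¹ * u t * t)} := by
      ext x
      simp only [Set.mem_setOf_eq, Set.mem_iInter, Set.mem_compl_iff, Set.mem_singleton_iff]
      constructor
      · intro hx t ht heq
        rw [hx] at heq
        apply hu t ht
        have : u t * h * t⁻¹ = h * t⁻¹ * u t * t * t⁻¹ := by rw [heq]; group
        group at this ⊢
        convert this using 1 <;> group
      · intro hx
        by_contra hxh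
        exact hx (x i) hxh (by group)
    rw [heq]
    exact (Set.toFinite _).isOpen_biInter fun t _ => hVopen t
  have hopen : ∀ (i : I) (s : Set H),
      IsOpen[TopologicalSpace.generateFrom 𝒮] ((fun x : I → H => x i) ⁻¹' s) := by
    intro i s
    letI tG : TopologicalSpace (I → H) := TopologicalSpace.generateFrom 𝒮
    have : (fun x : I → H => x i) ⁻¹' s = ⋃ h ∈ s, {x : I → H | x i = h} := by
      ext x; simp [eq_comm]
    rw [this]
    exact isOpen_biUnion fun h _ => fiber i h
  refine le_antisymm ?_ (le_generateFrom ?_)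
  · refine le_iInf fun i => ?_
    refine continuous_iff_le_induced.mp
      (?_ : Continuous[TopologicalSpace.generateFrom 𝒮, ⊥] (fun x : I → H => x i))
    exact continuous_def.mpr fun s _ => hopen i s
  · rintro s (⟨a, b, a', b', rfl⟩ | ⟨a, b, c, rfl⟩)
    · have : {x : I → H | a * x * b ≠ a' * x * b'} =
          ⋃ j, (fun x : I → H => x j) ⁻¹' {t | a j * t * b j ≠ a' j * t * b' j} := by
        ext x
        simp [Function.ne_iff]
      rw [this]
      exact isOpen_iUnion fun j =>
        (continuous_apply j).isOpen_preimage _ (isOpen_discrete _)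
    · have : {x : I → H | a * x * b ≠ c} =
          ⋃ j, (fun x : I → H => x j) ⁻¹' {t | a j * t * b j ≠ c j} := by
        ext x
        simp [Function.ne_iff]
      rw [this]
      exact isOpen_iUnion fun j =>
        (continuous_apply j).isOpen_preimage _ (isOpen_discrete _)
end

section
/- Let X be an infinite set and let G be the group of all bijections f : X → X with finite support supp(f) = {x∈X : f(x) ≠ x}, acting naturally on X. Then the Zariski G-topology on X is the discrete topology, i.e., every subset of X is open. Consequently, X admits no non-discrete Hausdorff topology making all finitely supported bijections of X continuous. -/
/-!
A Hausdorff topology making the finitely supported permutations continuous is finer than their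
Zariski topology, since the sets `{f ≠ g}` and `{f ≠ c}` are open in it; so it suffices to show
that the Zariski topology is discrete. For `a ≠ b` the transposition `swap a b` moves exactly
`a` and `b`, so every pair `{a, b}` is Zariski open, and `{a} = {a, b} ∩ {a, c}` for any third
point `c` of the infinite set `X`.
-/

open Topology

namespace Equiv

variable {X : Type*} [DecidableEq X]

theorem setOf_swap_apply_ne_self {a b : X} (hab : a ≠ b) :
    {x : X | swap a b x ≠ x} = {a, b} := by
  ext x
  simp [swap_apply_ne_self_iff, hab]

theorem finite_setOf_swap_apply_ne_self (a b : X) : {x : X | swap a b x ≠ x}.Finite := by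
  rcases eq_or_ne a b with rfl | hab
  · simp
  · simp [setOf_swap_apply_ne_self hab]

end Equiv

section Zariski

variable {X : Type*}

abbrev zariskiTopology (G : Set (Equiv.Perm X)) : TopologicalSpace X :=
  .generateFrom
    ({S : Set X | ∃ f g : Equiv.Perm X, f ∈ G ∧ g ∈ G ∧ S = {x : X | f x ≠ g x}} ∪
     {S : Set X | ∃ (f : Equiv.Perm X) (c : X), f ∈ G ∧ S = {x : X | f x ≠ c}})

theorem le_zariskiTopology [τ : TopologicalSpace X] [T2Space X] {G : Set (Equiv.Perm X)}
    (hG : ∀ f ∈ G, Continuous f) : τ ≤ zariskiTopology G := by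
  refine le_generateFrom ?_
  rintro S (⟨f, g, hf, hg, rfl⟩ | ⟨f, c, hf, rfl⟩)
  · exact isOpen_ne_fun (hG f hf) (hG g hg)
  · exact isOpen_ne_fun (hG f hf) continuous_const

theorem isOpen_pair_zariskiTopology [DecidableEq X] {G : Set (Equiv.Perm X)} (h1 : 1 ∈ G)
    {a b : X} (hab : a ≠ b) (hswap : Equiv.swap a b ∈ G) :
    IsOpen[zariskiTopology G] {a, b} := by
  refine TopologicalSpace.isOpen_generateFrom_of_mem (Or.inl ⟨_, 1, hswap, h1, ?_⟩)
  exact (Equiv.setOf_swap_apply_ne_self hab).symm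

end Zariski

theorem discreteTopology_of_isOpen_pair {X : Type*} [TopologicalSpace X] [Infinite X]
    (h : ∀ a b : X, a ≠ b → IsOpen ({a, b} : Set X)) : DiscreteTopology X := by
  refine discreteTopology_iff_isOpen_singleton.2 fun a => ?_
  obtain ⟨b, hab⟩ := exists_ne a
  obtain ⟨c, hc⟩ := (Set.toFinite {a, b}).infinite_compl.nonempty
  simp only [Set.mem_compl_iff, Set.mem_insert_iff, Set.mem_singleton_iff, not_or] at hc
  have hpair : ({a, b} : Set X) ∩ {a, c} = {a} := by
    rw [← Set.insert_inter_distrib, Set.singleton_inter_eq_empty.2 fun hb => hc.2 hb.symm,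
      insert_empty_eq]
  rw [← hpair]
  exact (h a b hab.symm).inter (h a c (Ne.symm hc.1))

theorem discreteTopology_zariskiTopology_finitelySupported (X : Type*) [Infinite X] :
    @DiscreteTopology X (zariskiTopology {f : Equiv.Perm X | {x : X | f x ≠ x}.Finite}) := by
  classical
  let _ := zariskiTopology {f : Equiv.Perm X | {x : X | f x ≠ x}.Finite}
  exact discreteTopology_of_isOpen_pair fun a b hab =>
    isOpen_pair_zariskiTopology (by simp) hab (Equiv.finite_setOf_swap_apply_ne_self a b)

/-- Let `X` be an infinite set and let `G` be the group of all bijections of `X` with finite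
support `supp f = {x | f x ≠ x}`, acting naturally on `X`.  Then the Zariski `G`-topology on
`X` is discrete: every subset of `X` is open.  Consequently, every Hausdorff topology on `X`
making all finitely supported bijections of `X` continuous is discrete, i.e. `X` admits no
non-discrete such topology. -/
theorem zariski_finitelySupportedPerms_discrete (X : Type*) [Infinite X] :
    (∀ U : Set X,
      IsOpen[TopologicalSpace.generateFrom
        ({S : Set X | ∃ f g : Equiv.Perm X,
            {x : X | f x ≠ x}.Finite ∧ {x : X | g x ≠ x}.Finite ∧
            S = {x : X | f x ≠ g x}} ∪
         {S : Set X | ∃ (f : Equiv.Perm X) (c : X),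
            {x : X | f x ≠ x}.Finite ∧ S = {x : X | f x ≠ c}})] U) ∧
    (∀ τ : TopologicalSpace X, @T2Space X τ →
      (∀ f : Equiv.Perm X, {x : X | f x ≠ x}.Finite → Continuous[τ, τ] f) →
      ∀ U : Set X, IsOpen[τ] U) := by
  have hdisc := discreteTopology_zariskiTopology_finitelySupported X
  have hZariski (U : Set X) :
      IsOpen[zariskiTopology {f : Equiv.Perm X | {x : X | f x ≠ x}.Finite}] U :=
    @isOpen_discrete X (zariskiTopology _) hdisc U
  refine ⟨hZariski, fun τ _ hcont U => ?_⟩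
  exact TopologicalSpace.le_def.1 (le_zariskiTopology hcont) U (hZariski U)
end

section
/- Let G be a monoid acting on a set X, let x_0∈X, and let φ be a filter on X with ⋂φ = {x_0}. Define τ_φ to be the family of all sets U⊆X such that for every g∈G with g•x_0∈U the preimage {x∈X : g•x∈U} belongs to φ. Then τ_φ is a topology on X; it is a G-topology; the filter φ converges to x_0 in τ_φ (every τ_φ-open set containing x_0 belongs to φ); and every G-topology σ on X in which φ converges to x_0 satisfies σ ⊆ τ_φ. Hence τ_φ is the largest G-topology on X for which φ converges to x_0. -/
/-!
Openness of `U` in `τ_φ` passes to `{x | g • x ∈ U}` because `g • (h • x) = (g * h) • x`, so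
every `x ↦ g • x` is continuous; the case `g = 1` is the convergence of `φ` to `x₀`.
Conversely, in a `G`-topology in which `φ` converges to `x₀`, each `{x | g • x ∈ U}` with `U`
open is an open neighbourhood of `x₀` as soon as it contains `x₀`, hence lies in `φ`.
-/

open Topology

/-- For a monoid `G` acting on a set `X`, a point `x₀ : X` and a filter `φ` on `X`, the
topology `τ_φ` whose open sets are exactly the sets `U` such that for every `g : G` with
`g • x₀ ∈ U` the preimage `{x | g • x ∈ U}` belongs to `φ`. -/
def tauPhi (G X : Type*) [Monoid G] [MulAction G X] (x₀ : X) (φ : Filter X) :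
    TopologicalSpace X where
  IsOpen U := ∀ g : G, g • x₀ ∈ U → {x : X | g • x ∈ U} ∈ φ
  isOpen_univ := fun _ _ => Filter.univ_mem' fun _ => trivial
  isOpen_inter := fun U V hU hV g hg =>
    Filter.inter_mem (hU g hg.1) (hV g hg.2)
  isOpen_sUnion := fun S hS g hg => by
    obtain ⟨t, htS, hgt⟩ := hg
    exact Filter.mem_of_superset (hS t htS g hgt) fun x hx => ⟨t, htS, hx⟩

section

variable {G X : Type*} [Monoid G] [MulAction G X] {x₀ : X} {φ : Filter X}

theorem isOpen_tauPhi_preimage_smul {U : Set X} (hU : IsOpen[tauPhi G X x₀ φ] U) (g : G) :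
    IsOpen[tauPhi G X x₀ φ] ((g • ·) ⁻¹' U) := fun h hh => by
  simpa only [Set.mem_preimage, mul_smul] using hU (g * h) (by rwa [mul_smul])

theorem continuous_smul_tauPhi (g : G) :
    Continuous[tauPhi G X x₀ φ, tauPhi G X x₀ φ] (g • ·) :=
  continuous_def.2 fun _ hU => isOpen_tauPhi_preimage_smul hU g

variable (G) in
theorem le_nhds_tauPhi : φ ≤ @nhds X (tauPhi G X x₀ φ) x₀ := by
  let := tauPhi G X x₀ φ
  exact le_nhds_iff.2 fun U hx hU => by
    simpa only [one_smul, Set.ofPred_mem_eq] using hU 1 (by rwa [one_smul])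

theorem tauPhi_le {σ : TopologicalSpace X} (hσ : ∀ g : G, Continuous[σ, σ] (g • ·))
    (hφ : φ ≤ @nhds X σ x₀) : tauPhi G X x₀ φ ≤ σ :=
  TopologicalSpace.le_def.2 fun U hU g hg => hφ (((hσ g).isOpen_preimage U hU).mem_nhds hg)

end

theorem tauPhi_largest_GTopology_general (G X : Type*) [Monoid G] [MulAction G X]
    (x₀ : X) (φ : Filter X) :
    (∀ U : Set X, IsOpen[tauPhi G X x₀ φ] U ↔
        ∀ g : G, g • x₀ ∈ U → {x : X | g • x ∈ U} ∈ φ) ∧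
    (∀ g : G, Continuous[tauPhi G X x₀ φ, tauPhi G X x₀ φ] fun x => g • x) ∧
    (∀ U : Set X, IsOpen[tauPhi G X x₀ φ] U → x₀ ∈ U → U ∈ φ) ∧
    (∀ σ : TopologicalSpace X,
      (∀ g : G, Continuous[σ, σ] fun x => g • x) →
      (∀ U : Set X, IsOpen[σ] U → x₀ ∈ U → U ∈ φ) →
      ∀ U : Set X, IsOpen[σ] U → IsOpen[tauPhi G X x₀ φ] U) := by
  refine ⟨fun _ => Iff.rfl, continuous_smul_tauPhi, fun U hU hx => ?_, fun σ hσ hconv => ?_⟩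
  · let := tauPhi G X x₀ φ
    exact le_nhds_tauPhi G (hU.mem_nhds hx)
  · let := σ
    exact TopologicalSpace.le_def.1 (tauPhi_le hσ (le_nhds_iff.2 fun U hx hU => hconv U hU hx))

/-- Let `G` be a monoid acting on a set `X`, `x₀ ∈ X`, and `φ` a filter on `X` with
`⋂ φ = {x₀}`.  Then the family `τ_φ` of all sets `U ⊆ X` such that for every `g : G` with
`g • x₀ ∈ U` one has `{x | g • x ∈ U} ∈ φ` is a topology on `X`; it is a `G`-topology; the
filter `φ` converges to `x₀` in `τ_φ`; and every `G`-topology `σ` on `X` in which `φ`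
converges to `x₀` is contained in `τ_φ`.  Hence `τ_φ` is the largest `G`-topology on `X`
for which `φ` converges to `x₀`. -/
theorem tauPhi_largest_GTopology (G X : Type*) [Monoid G] [MulAction G X]
    (x₀ : X) (φ : Filter X) (hφ : ⋂₀ φ.sets = {x₀}) :
    (∀ U : Set X, IsOpen[tauPhi G X x₀ φ] U ↔
        ∀ g : G, g • x₀ ∈ U → {x : X | g • x ∈ U} ∈ φ) ∧
    (∀ g : G, Continuous[tauPhi G X x₀ φ, tauPhi G X x₀ φ] fun x => g • x) ∧
    (∀ U : Set X, IsOpen[tauPhi G X x₀ φ] U → x₀ ∈ U → U ∈ φ) ∧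
    (∀ σ : TopologicalSpace X,
      (∀ g : G, Continuous[σ, σ] fun x => g • x) →
      (∀ U : Set X, IsOpen[σ] U → x₀ ∈ U → U ∈ φ) →
      ∀ U : Set X, IsOpen[σ] U → IsOpen[tauPhi G X x₀ φ] U) :=
  tauPhi_largest_GTopology_general G X x₀ φ
end

section
/- Let G be a monoid acting on a set X and let φ be a special filter on X with ⋂φ = {x_0}. Then the topology τ_φ, consisting of all sets U⊆X such that for every g∈G with g•x_0∈U the preimage {x∈X : g•x∈U} belongs to φ, satisfies the separation axiom T1: every singleton subset of X is τ_φ-closed. -/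
open Topology Cardinal

universe u

/-
If `a • x₀ ≠ y`, then `a • x_β ≠ y` for all large `β`: either `y` avoids the whole set
`{g_γ • x_δ}`, or `y = g_γ • x_δ` and condition (2) of speciality applies to every `β`
beyond the indices of `a`, `g_γ` and `x_δ`. The tails `{x₀} ∪ {x_β : β > α}` lie in `φ`,
so `{z | a • z ≠ y} ∈ φ`, which is what openness of `X ∖ {y}` in `τ_φ` asks for.
-/

/-- An injective transfinite sequence `(x_α)_{α<κ}` of points of a `G`-act `X` is *special*
(with least index `i₀`) if there is an enumeration `G = {g_α}_{α<κ}` of the monoid `G` such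
that for all `α < κ` and all `β, γ, δ < α`:
(1) if `g_β • x_{i₀} ≠ g_γ • x_{i₀}` then `g_β • x_α ≠ g_γ • x_α`, and
(2) if `g_β • x_{i₀} ≠ g_γ • x_δ` then `g_β • x_α ≠ g_γ • x_δ`. -/
def IsSpecialSeq (G : Type u) {X : Type u} [Monoid G] [MulAction G X] (κ : Cardinal.{u})
    (x : κ.ord.ToType → X) (i₀ : κ.ord.ToType) : Prop :=
  (∀ i, i₀ ≤ i) ∧ Function.Injective x ∧
  ∃ g : κ.ord.ToType → G, Function.Surjective g ∧
    ∀ α β γ δ : κ.ord.ToType, β < α → γ < α → δ < α →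
      (g β • x i₀ ≠ g γ • x i₀ → g β • x α ≠ g γ • x α) ∧
      (g β • x i₀ ≠ g γ • x δ → g β • x α ≠ g γ • x δ)

/-- A filter `φ` on a `G`-act `X` is *special* (with `⋂ φ = {x₀}`) if for some cardinal `κ`
there is a special sequence `(x_α)_{α<κ}` in `X` with first term `x₀` such that
`⋂ φ = {x₀}` and `{x₀} ∪ {x_β : α < β < κ} ∈ φ` for all `α < κ`. -/
def IsSpecialFilter (G : Type u) {X : Type u} [Monoid G] [MulAction G X]
    (φ : Filter X) (x₀ : X) : Prop :=
  ∃ (κ : Cardinal.{u}) (x : κ.ord.ToType → X) (i₀ : κ.ord.ToType),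
    IsSpecialSeq G κ x i₀ ∧ x i₀ = x₀ ∧ ⋂₀ φ.sets = {x₀} ∧
    ∀ α : κ.ord.ToType, insert x₀ (x '' Set.Ioi α) ∈ φ

theorem isClosed_singleton_tauPhi {G X : Type*} [Monoid G] [MulAction G X] {x₀ : X}
    {φ : Filter X} {y : X} (h : ∀ a : G, a • x₀ ≠ y → {z | a • z ≠ y} ∈ φ) :
    IsClosed[tauPhi G X x₀ φ] {y} :=
  @IsClosed.mk X (tauPhi G X x₀ φ) {y} h

theorem IsSpecialSeq.eventually_smul_ne {G X : Type u} [Monoid G] [MulAction G X]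
    {κ : Cardinal.{u}} {x : κ.ord.ToType → X} {i₀ : κ.ord.ToType}
    (hs : IsSpecialSeq G κ x i₀) {a : G} {y : X} (ha : a • x i₀ ≠ y) :
    ∃ α, ∀ β, α < β → a • x β ≠ y := by
  obtain ⟨-, -, g, hg, hspec⟩ := hs
  obtain ⟨μ, rfl⟩ := hg a
  by_cases hy : ∃ γ δ, g γ • x δ = y
  · obtain ⟨γ, δ, rfl⟩ := hy
    refine ⟨max μ (max γ δ), fun β hβ => ?_⟩
    simp only [max_lt_iff] at hβ
    exact (hspec β μ γ δ hβ.1 hβ.2.1 hβ.2.2).2 ha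
  · simp only [not_exists] at hy
    exact ⟨i₀, fun β _ => hy μ β⟩

/-- If `φ` is a special filter on a `G`-act `X` with `⋂ φ = {x₀}`, then the topology
`τ_φ` satisfies the separation axiom `T₁`: every singleton is closed. -/
theorem tauPhi_t1_of_specialFilter {G X : Type u} [Monoid G] [MulAction G X]
    (φ : Filter X) (x₀ : X) (hφ : IsSpecialFilter G φ x₀) :
    ∀ y : X, IsClosed[tauPhi G X x₀ φ] {y} := by
  obtain ⟨κ, x, i₀, hs, rfl, -, htail⟩ := hφ
  intro y
  refine isClosed_singleton_tauPhi fun a ha => ?_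
  obtain ⟨α, hα⟩ := hs.eventually_smul_ne ha
  refine Filter.mem_of_superset (htail α) ?_
  rintro z (rfl | ⟨β, hβ, rfl⟩)
  exacts [ha, hα β hβ]
end

section
/- Let G be a monoid acting on a set X and let φ be a special filter on X with ⋂φ = {x_0}. Then the topological space (X, τ_φ), where τ_φ consists of all sets U⊆X such that for every g∈G with g•x_0∈U the preimage {x∈X : g•x∈U} belongs to φ, is normal: it is T1 and any two disjoint τ_φ-closed sets have disjoint τ_φ-open neighborhoods. -/
open Topology Cardinal

universe u

/-!
Two disjoint closed sets `A` and `B` are separated by the clopen set `V` obtained from `B` by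
repeatedly adding the points `g_γ • x_β` (`γ < β`, outside `A`) whenever `g_γ • x₀` is already
in `V`. Openness of `V` is built in, since the tail `{x_β : β > γ}` is in `φ` and so is the
preimage of `Aᶜ` under `g_γ`. Closedness of `V` comes from the special conditions: they force
any point `g_η • x_β ∈ V \ B` with `η < β` to have `g_η • x₀ ∈ V` as well, by induction along the
construction of `V`. Points are closed by the same tail argument, using condition (2) once.
-/

section

variable {G X ι : Type*} [Monoid G] [MulAction G X] [LinearOrder ι]

structure IsSpecialEnum (g : ι → G) (x : ι → X) (x₀ : X) : Prop where
  eq_of_smul_eq_smul_self : ∀ ⦃α β γ⦄, β < α → γ < α → g β • x α = g γ • x α →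
    g β • x₀ = g γ • x₀
  eq_of_smul_eq_smul : ∀ ⦃α β γ δ⦄, β < α → γ < α → δ < α → g β • x α = g γ • x δ →
    g β • x₀ = g γ • x δ

theorem IsSpecialSeq.exists_isSpecialEnum {G X : Type u} [Monoid G] [MulAction G X]
    {κ : Cardinal.{u}} {x : κ.ord.ToType → X} {i₀ : κ.ord.ToType} (hx : IsSpecialSeq G κ x i₀) :
    ∃ g : κ.ord.ToType → G, Function.Surjective g ∧ IsSpecialEnum g x (x i₀) := by
  obtain ⟨-, -, g, hg, hc⟩ := hx
  exact ⟨g, hg, fun _ _ _ hβ hγ => not_imp_not.mp (hc _ _ _ _ hβ hγ hγ).1,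
    fun _ _ _ _ hβ hγ hδ => not_imp_not.mp (hc _ _ _ _ hβ hγ hδ).2⟩

variable {g : ι → G} {x : ι → X} {x₀ : X} {φ : Filter X}

theorem isClosed_tauPhi_iff {A : Set X} :
    IsClosed[tauPhi G X x₀ φ] A ↔ ∀ h : G, h • x₀ ∉ A → {y | h • y ∉ A} ∈ φ :=
  (@isOpen_compl_iff X A (tauPhi G X x₀ φ)).symm

theorem isOpen_tauPhi_of_forall_tail (hg : Function.Surjective g)
    (htail : ∀ α, insert x₀ (x '' Set.Ioi α) ∈ φ) {U : Set X}
    (hU : ∀ η, g η • x₀ ∈ U → ∃ α, ∃ S ∈ φ, ∀ β > α, x β ∈ S → g η • x β ∈ U) :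
    IsOpen[tauPhi G X x₀ φ] U := by
  intro h hh
  obtain ⟨η, rfl⟩ := hg h
  obtain ⟨α, S, hS, hαS⟩ := hU η hh
  filter_upwards [htail α, hS] with y hy hyS
  obtain rfl | ⟨β, hβ, rfl⟩ := hy
  · exact hh
  · exact hαS β hβ hyS

theorem isClosed_singleton_tauPhi_s10 (hg : Function.Surjective g) (hc : IsSpecialEnum g x x₀)
    (htail : ∀ α, insert x₀ (x '' Set.Ioi α) ∈ φ) (y : X) :
    IsClosed[tauPhi G X x₀ φ] {y} := by
  refine (@isOpen_compl_iff X {y} (tauPhi G X x₀ φ)).mp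
    (isOpen_tauPhi_of_forall_tail hg htail fun η hη => ?_)
  by_cases hy : ∃ β₀, g η • x β₀ = y
  · obtain ⟨β₀, rfl⟩ := hy
    refine ⟨max η β₀, Set.univ, Filter.univ_mem, fun β hβ _ heq => hη ?_⟩
    obtain ⟨hηβ, hβ₀β⟩ := max_lt_iff.mp hβ
    exact hc.eq_of_smul_eq_smul hηβ hηβ hβ₀β heq
  · exact ⟨η, Set.univ, Filter.univ_mem, fun β _ _ heq => hy ⟨β, heq⟩⟩

variable (g x x₀) in
inductive Saturation (A B : Set X) : X → Prop
  | of_mem {y : X} : y ∈ B → Saturation A B y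
  | smul {γ β : ι} : Saturation A B (g γ • x₀) → γ < β → g γ • x β ∉ A →
      Saturation A B (g γ • x β)

variable {A B : Set X}

theorem Saturation.notMem (hAB : Disjoint A B) {y : X} (hy : Saturation g x x₀ A B y) :
    y ∉ A := by
  cases hy with
  | of_mem hB => exact Set.disjoint_right.mp hAB hB
  | smul _ _ hA => exact hA

theorem Saturation.smul_basepoint (hc : IsSpecialEnum g x x₀) {η β : ι}
    (h : Saturation g x x₀ A B (g η • x β)) (hηβ : η < β) (hB : g η • x β ∉ B) :
    Saturation g x x₀ A B (g η • x₀) := by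
  generalize hy : g η • x β = y at h hB
  induction h generalizing η β with
  | of_mem hy' => exact absurd hy' hB
  | @smul γ β' hγ hγβ' _ ih =>
    rcases lt_trichotomy β' β with hlt | rfl | hgt
    · rw [hc.eq_of_smul_eq_smul hηβ (hγβ'.trans hlt) hlt hy]
      exact .smul hγ hγβ' ‹_›
    · rwa [hc.eq_of_smul_eq_smul_self hηβ hγβ' hy]
    · have hγη := hc.eq_of_smul_eq_smul hγβ' (hηβ.trans hgt) hgt hy.symm
      exact ih hηβ hγη.symm (by rwa [hγη, hy])

theorem exists_isOpen_separating (hg : Function.Surjective g) (hc : IsSpecialEnum g x x₀)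
    (htail : ∀ α, insert x₀ (x '' Set.Ioi α) ∈ φ)
    (hA : IsClosed[tauPhi G X x₀ φ] A) (hB : IsClosed[tauPhi G X x₀ φ] B) (hAB : Disjoint A B) :
    ∃ U V : Set X, IsOpen[tauPhi G X x₀ φ] U ∧ IsOpen[tauPhi G X x₀ φ] V ∧
      A ⊆ U ∧ B ⊆ V ∧ Disjoint U V := by
  set V := {y | Saturation g x x₀ A B y}
  rw [isClosed_tauPhi_iff] at hA hB
  refine ⟨Vᶜ, V, ?_, ?_, fun a ha hV => hV.notMem hAB ha, fun _ => .of_mem,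
    disjoint_compl_left⟩
  · refine isOpen_tauPhi_of_forall_tail hg htail fun η hη =>
      ⟨η, {y | g η • y ∉ B}, hB _ ?_, ?_⟩
    · exact fun h => hη (.of_mem h)
    · exact fun β hηβ hβB hβV => hη (hβV.smul_basepoint hc hηβ hβB)
  · refine isOpen_tauPhi_of_forall_tail hg htail fun η hη =>
      ⟨η, {y | g η • y ∉ A}, hA _ ?_, ?_⟩
    · exact hη.notMem hAB
    · exact fun β hηβ hβA => .smul hη hηβ hβA

end

/-- If `φ` is a special filter on a `G`-act `X` with `⋂ φ = {x₀}`, then the topological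
space `(X, τ_φ)` is normal: it is `T₁` and any two disjoint closed sets have disjoint open
neighborhoods. -/
theorem tauPhi_normal_of_specialFilter {G X : Type u} [Monoid G] [MulAction G X]
    (φ : Filter X) (x₀ : X) (hφ : IsSpecialFilter G φ x₀) :
    (∀ y : X, IsClosed[tauPhi G X x₀ φ] {y}) ∧
    (∀ A B : Set X, IsClosed[tauPhi G X x₀ φ] A → IsClosed[tauPhi G X x₀ φ] B →
      Disjoint A B → ∃ U V : Set X, IsOpen[tauPhi G X x₀ φ] U ∧ IsOpen[tauPhi G X x₀ φ] V ∧
        A ⊆ U ∧ B ⊆ V ∧ Disjoint U V) := by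
  obtain ⟨κ, x, i₀, hx, rfl, -, htail⟩ := hφ
  obtain ⟨g, hg, hc⟩ := hx.exists_isSpecialEnum
  exact ⟨isClosed_singleton_tauPhi_s10 hg hc htail,
    fun A B hA hB hAB => exists_isOpen_separating hg hc htail hA hB hAB⟩
end

section
/- Let G be a monoid acting on a set X and let φ be a special filter on X with ⋂φ = {x_0}, and let τ_φ consist of all sets U⊆X such that for every g∈G with g•x_0∈U the preimage {x∈X : g•x∈U} belongs to φ. Then for every set F∈φ the orbit set G(F) = {g•x : g∈G, x∈F} is both open and closed in (X, τ_φ), and the complement X∖G(F) is a discrete subspace of (X, τ_φ). -/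
open Topology Cardinal

universe u

/-! Every `F ∈ φ` contains `x₀`, since `⋂ φ = {x₀}`. Hence the orbit set `G(F)` contains every
point `g • x₀`, so its complement contains none of them and is vacuously `τ_φ`-open. Any set
containing `G(F)` is `τ_φ`-open, because its preimage under each `g` contains `F ∈ φ`; in
particular `G(F) ∪ {y}` is open for each `y ∉ G(F)`, which isolates `y` in the complement. -/

theorem IsSpecialFilter.base_mem {G X : Type u} [Monoid G] [MulAction G X] {φ : Filter X}
    {x₀ : X} (hφ : IsSpecialFilter G φ x₀) {F : Set X} (hF : F ∈ φ) : x₀ ∈ F := by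
  obtain ⟨-, -, -, -, -, hInter, -⟩ := hφ
  have hx₀ : x₀ ∈ ⋂₀ φ.sets := hInter ▸ rfl
  exact hx₀ F hF

theorem discreteTopology_compl_of_isOpen_insert {X : Type*} [TopologicalSpace X] {O : Set X}
    (hO : ∀ y ∉ O, IsOpen (insert y O)) : DiscreteTopology (Oᶜ : Set X) := by
  refine discreteTopology_iff_isOpen_singleton.mpr fun ⟨y, hy⟩ ↦ ?_
  refine isOpen_induced_iff.mpr ⟨insert y O, hO y hy, ?_⟩
  ext ⟨z, hz⟩
  simp only [Set.mem_preimage, Set.mem_insert_iff, Set.mem_singleton_iff, Subtype.ext_iff]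
  exact or_iff_left hz

section tauPhi

variable {G X : Type*} [Monoid G] [MulAction G X] {x₀ : X} {φ : Filter X} {F U : Set X}

theorem isOpen_tauPhi_of_smul_mem (hF : F ∈ φ) (hU : ∀ g : G, ∀ x ∈ F, g • x ∈ U) :
    IsOpen[tauPhi G X x₀ φ] U :=
  fun g _ ↦ φ.mem_of_superset hF fun x hx ↦ hU g x hx

theorem isClosed_tauPhi_of_smul_mem (hU : ∀ g : G, g • x₀ ∈ U) :
    IsClosed[tauPhi G X x₀ φ] U :=
  @IsClosed.mk X (tauPhi G X x₀ φ) U fun g hg ↦ absurd (hU g) hg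

end tauPhi

/-- If `φ` is a special filter on a `G`-act `X` with `⋂ φ = {x₀}`, then for every set
`F ∈ φ` the orbit set `G(F) = {g • x : g ∈ G, x ∈ F}` is both open and closed in
`(X, τ_φ)`, and the complement `X ∖ G(F)` is a discrete subspace of `(X, τ_φ)`. -/
theorem tauPhi_orbit_clopen_of_specialFilter {G X : Type u} [Monoid G] [MulAction G X]
    (φ : Filter X) (x₀ : X) (hφ : IsSpecialFilter G φ x₀) :
    ∀ F ∈ φ,
      IsOpen[tauPhi G X x₀ φ] {y : X | ∃ g : G, ∃ x ∈ F, y = g • x} ∧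
      IsClosed[tauPhi G X x₀ φ] {y : X | ∃ g : G, ∃ x ∈ F, y = g • x} ∧
      @DiscreteTopology ({y : X | ∃ g : G, ∃ x ∈ F, y = g • x}ᶜ : Set X)
        (TopologicalSpace.induced Subtype.val (tauPhi G X x₀ φ)) := by
  intro F hF
  let := tauPhi G X x₀ φ
  have hsmul_mem (g : G) (x : X) (hx : x ∈ F) : g • x ∈ {y : X | ∃ g : G, ∃ x ∈ F, y = g • x} :=
    ⟨g, x, hx, rfl⟩
  refine ⟨isOpen_tauPhi_of_smul_mem hF hsmul_mem,
    isClosed_tauPhi_of_smul_mem fun g ↦ hsmul_mem g x₀ (hφ.base_mem hF),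
    discreteTopology_compl_of_isOpen_insert fun y _ ↦ ?_⟩
  exact isOpen_tauPhi_of_smul_mem hF fun g x hx ↦ Set.mem_insert_of_mem y (hsmul_mem g x hx)
end

section
/- Let G be a monoid acting on a set X and let φ be a special filter on X with ⋂φ = {x_0}, witnessed by a special sequence with range X_0 = {x_α : α<κ}, and let τ_φ consist of all sets U⊆X such that for every g∈G with g•x_0∈U the preimage {x∈X : g•x∈U} belongs to φ. Then {F ∩ X_0 : F∈φ} = {U ∩ X_0 : U∈τ_φ, x_0∈U}. -/
/-!
With `g = 1`, every `τ_φ`-open neighbourhood of `x₀` lies in `φ`. Conversely, for `F ∈ φ` the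
set `F ∪ X₀ᶜ` has the same trace on `X₀` as `F` and is `τ_φ`-open: if `a = g_γ` and
`1 = g_ε`, then past `max γ ε` condition (2) of a special sequence leaves only two ways for
`a • x_α` to land in `X₀`, namely `a • x_α = x_α` or `a • x_α = a • x₀`, and in both cases it
lies in `F ∪ X₀ᶜ` whenever `x_α ∈ F` and `a • x₀ ∈ F ∪ X₀ᶜ`.
-/

open Topology Cardinal

universe u

theorem mem_of_isOpen_tauPhi {G X : Type*} [Monoid G] [MulAction G X] {x₀ : X} {φ : Filter X}
    {U : Set X} (hU : IsOpen[tauPhi G X x₀ φ] U) (hx₀ : x₀ ∈ U) : U ∈ φ := by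
  simpa only [one_smul, Set.ofPred_mem_eq] using hU 1 (by rwa [one_smul])

namespace IsSpecialSeq

variable {G X : Type u} [Monoid G] [MulAction G X] {κ : Cardinal.{u}}
  {x : κ.ord.ToType → X} {i₀ : κ.ord.ToType}

theorem exists_forall_gt_smul_mem_range (hx : IsSpecialSeq G κ x i₀) (a : G) :
    ∃ α₀, ∀ α, α₀ < α → a • x α ∈ Set.range x → a • x α = x α ∨ a • x α = a • x i₀ := by
  obtain ⟨hi₀, hinj, g, hg, hspec⟩ := hx
  obtain ⟨γ, rfl⟩ := hg a
  obtain ⟨ε, hε⟩ := hg 1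
  refine ⟨max γ ε, fun α hα ⟨δ, hδ⟩ => ?_⟩
  have hγ : γ < α := (le_max_left γ ε).trans_lt hα
  have hε' : ε < α := (le_max_right γ ε).trans_lt hα
  rcases lt_trichotomy δ α with hδα | rfl | hαδ
  · refine Or.inr (by_contra fun hne => ?_)
    have h := (hspec α γ ε δ hγ hε' hδα).2
    rw [hε, one_smul] at h
    exact h (fun h' => hne (hδ.symm.trans h'.symm)) hδ.symm
  · exact Or.inl hδ.symm
  · have hne : x i₀ ≠ x δ := fun h => ((hi₀ α).trans_lt hαδ).ne (hinj h)
    -- condition (2) at stage `δ`, with `x_α` as the earlier point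
    have h := (hspec δ ε γ α (hε'.trans hαδ) (hγ.trans hαδ) hαδ).2
    rw [hε, one_smul, one_smul] at h
    exact absurd hδ (h (hδ ▸ hne))

theorem isOpen_tauPhi_union_compl_range (hx : IsSpecialSeq G κ x i₀) {φ : Filter X}
    (hmem : ∀ α, insert (x i₀) (x '' Set.Ioi α) ∈ φ) {F : Set X} (hF : F ∈ φ) :
    IsOpen[tauPhi G X (x i₀) φ] (F ∪ (Set.range x)ᶜ) := by
  intro a ha
  obtain ⟨α₀, hα₀⟩ := hx.exists_forall_gt_smul_mem_range a
  filter_upwards [hmem α₀, hF] with y hy hyF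
  rcases hy with rfl | ⟨α, hα, rfl⟩
  · exact ha
  · show a • x α ∈ F ∪ (Set.range x)ᶜ
    by_cases hr : a • x α ∈ Set.range x
    · rcases hα₀ α hα hr with h | h
      · exact Or.inl (h.symm ▸ hyF)
      · exact h.symm ▸ ha
    · exact Or.inr hr

end IsSpecialSeq

/-- Let `φ` be a special filter on a `G`-act `X` with `⋂ φ = {x₀}`, witnessed by a special
sequence with range `X₀ = {x_α : α < κ}`.  Then
`{F ∩ X₀ : F ∈ φ} = {U ∩ X₀ : U ∈ τ_φ, x₀ ∈ U}`. -/
theorem tauPhi_trace_eq_of_specialFilter {G X : Type u} [Monoid G] [MulAction G X]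
    (φ : Filter X) (x₀ : X) (κ : Cardinal.{u}) (x : κ.ord.ToType → X) (i₀ : κ.ord.ToType)
    (hx : IsSpecialSeq G κ x i₀) (hx₀ : x i₀ = x₀) (hφ : ⋂₀ φ.sets = {x₀})
    (hmem : ∀ α : κ.ord.ToType, insert x₀ (x '' Set.Ioi α) ∈ φ) :
    {s : Set X | ∃ F ∈ φ, s = F ∩ Set.range x} =
      {s : Set X | ∃ U : Set X, IsOpen[tauPhi G X x₀ φ] U ∧ x₀ ∈ U ∧ s = U ∩ Set.range x} := by
  subst hx₀
  ext s
  constructor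
  · rintro ⟨F, hF, rfl⟩
    have hx₀F : x i₀ ∈ F := (hφ.symm ▸ rfl : x i₀ ∈ ⋂₀ φ.sets) F hF
    refine ⟨F ∪ (Set.range x)ᶜ, hx.isOpen_tauPhi_union_compl_range hmem hF, Or.inl hx₀F, ?_⟩
    rw [Set.union_inter_distrib_right, Set.compl_inter_self, Set.union_empty]
  · rintro ⟨U, hU, hx₀U, rfl⟩
    exact ⟨U, mem_of_isOpen_tauPhi hU hx₀U, rfl⟩
end

section
/- Let G be a monoid acting on a set X, let x_0∈X, and let κ be an infinite cardinal such that the cardinality of G is at most κ and every family 𝒰 of ζ_G-open sets with ⋂𝒰 = {x_0} has cardinality at least κ (i.e., κ ≤ ψ(x_0, ζ_G)), where ζ_G is the Zariski G-topology. Then X contains a special sequence (x_α)_{α<κ} with first term x_0. -/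
open Topology Cardinal

universe u

/-!
The sequence is built by transfinite recursion. At stage `α` the required inequalities say
that `x_α` lies in every set of a family of fewer than `κ` Zariski-open sets, namely those
subbasic sets `{y | g_β • y ≠ g_γ • y}`, `{y | g_β • y ≠ g_γ • x_δ}`, `{y | y ≠ x_δ}`
(`β, γ, δ < α`) that contain `x₀`. Since the pseudocharacter of `x₀` is at least `κ`, the
intersection of such a family is not `{x₀}`, so a new point `x_α ≠ x₀` can be chosen in it.
-/

section Pseudocharacter

variable {X : Type u} [t : TopologicalSpace X] {x₀ : X} {κ : Cardinal.{u}}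

theorem exists_ne_forall_mem_of_mk_lt_pseudocharacter
    (hψ : ∀ 𝒰 : Set (Set X), (∀ U ∈ 𝒰, IsOpen U) → ⋂₀ 𝒰 = {x₀} → κ ≤ #𝒰)
    {ι : Type u} (U : ι → Set X) (hU : ∀ i, IsOpen (U i)) (hι : #ι < κ) :
    ∃ y ≠ x₀, ∀ i, x₀ ∈ U i → y ∈ U i := by
  by_contra! h
  have hcard : #(U '' {i | x₀ ∈ U i}) < κ :=
    Cardinal.mk_image_le.trans_lt ((Cardinal.mk_subtype_le _).trans_lt hι)
  refine hcard.not_ge (hψ _ (by rintro _ ⟨i, -, rfl⟩; exact hU i) ?_)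
  refine Set.Subset.antisymm (fun y hy => ?_) (by rintro _ rfl _ ⟨i, hi, rfl⟩; exact hi)
  by_contra hyx
  obtain ⟨i, hx₀i, hyi⟩ := h y hyx
  exact hyi (hy _ ⟨i, hx₀i, rfl⟩)

end Pseudocharacter

section Zariski

variable {G X : Type u} [Monoid G] [MulAction G X]

theorem isOpen_zariskiGTopology_smul_ne_smul (f g : G) :
    IsOpen[zariskiGTopology G X] {x : X | f • x ≠ g • x} :=
  TopologicalSpace.GenerateOpen.basic _ (Or.inl ⟨f, g, rfl⟩)

theorem isOpen_zariskiGTopology_smul_ne (f : G) (c : X) :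
    IsOpen[zariskiGTopology G X] {x : X | f • x ≠ c} :=
  TopologicalSpace.GenerateOpen.basic _ (Or.inr ⟨f, c, rfl⟩)

theorem isOpen_zariskiGTopology_ne (c : X) : IsOpen[zariskiGTopology G X] {x : X | x ≠ c} := by
  simpa using isOpen_zariskiGTopology_smul_ne (1 : G) c

/-- `y` is admissible as the next term `x_α` of a special sequence with first term `x₀`,
where `v = (x_δ)_{δ<α}` and `g = (g_β)_{β<α}`. -/
def IsSpecialExtension {I : Type*} (g : I → G) (v : I → X) (x₀ y : X) : Prop :=
  y ≠ x₀ ∧ (∀ β γ, g β • x₀ ≠ g γ • x₀ → g β • y ≠ g γ • y) ∧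
    (∀ β γ δ, g β • x₀ ≠ g γ • v δ → g β • y ≠ g γ • v δ) ∧ ∀ δ, x₀ ≠ v δ → y ≠ v δ

theorem mk_sum_prod_lt {I : Type u} {κ : Cardinal.{u}} (hκ : ℵ₀ ≤ κ) (hI : #I < κ) :
    #((I × I) ⊕ (I × I × I) ⊕ I) < κ := by
  simp only [Cardinal.mk_sum, Cardinal.mk_prod, Cardinal.lift_id]
  exact Cardinal.add_lt_of_lt hκ (Cardinal.mul_lt_of_lt hκ hI hI)
    (Cardinal.add_lt_of_lt hκ (Cardinal.mul_lt_of_lt hκ hI (Cardinal.mul_lt_of_lt hκ hI hI)) hI)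

theorem exists_isSpecialExtension {x₀ : X} {κ : Cardinal.{u}} (hκ : ℵ₀ ≤ κ)
    (hψ : ∀ 𝒰 : Set (Set X), (∀ U ∈ 𝒰, IsOpen[zariskiGTopology G X] U) →
      ⋂₀ 𝒰 = {x₀} → κ ≤ #𝒰)
    {I : Type u} (hI : #I < κ) (g : I → G) (v : I → X) :
    ∃ y, IsSpecialExtension g v x₀ y := by
  let U : (I × I) ⊕ (I × I × I) ⊕ I → Set X :=
    Sum.elim (fun p => {y | g p.1 • y ≠ g p.2 • y})
      (Sum.elim (fun p => {y | g p.1 • y ≠ g p.2.1 • v p.2.2}) fun δ => {y | y ≠ v δ})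
  have hU : ∀ i, IsOpen[zariskiGTopology G X] (U i) := by
    rintro (_ | _ | _)
    exacts [isOpen_zariskiGTopology_smul_ne_smul _ _, isOpen_zariskiGTopology_smul_ne _ _,
      isOpen_zariskiGTopology_ne _]
  obtain ⟨y, hyx₀, hy⟩ := exists_ne_forall_mem_of_mk_lt_pseudocharacter
    (t := zariskiGTopology G X) hψ U hU (mk_sum_prod_lt hκ hI)
  exact ⟨y, hyx₀, fun β γ => hy (.inl (β, γ)), fun β γ δ => hy (.inr (.inl (β, γ, δ))),
    fun δ => hy (.inr (.inr δ))⟩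

end Zariski

theorem exists_forall_Iio_rec {I X : Type*} [Preorder I] [WellFoundedLT I]
    {P : ∀ α : I, (Set.Iio α → X) → X → Prop} (h : ∀ α v, ∃ y, P α v y) :
    ∃ x : I → X, ∀ α, P α (fun β => x β) (x α) := by
  choose F hF using h
  refine ⟨wellFounded_lt.fix fun α x => F α fun β => x β β.2, fun α => ?_⟩
  rw [wellFounded_lt.fix_eq]
  exact hF _ _

theorem isSpecialSeq_of_isSpecialExtension {G X : Type u} [Monoid G] [MulAction G X]
    {κ : Cardinal.{u}} {x : κ.ord.ToType → X} {i₀ : κ.ord.ToType} (hi₀ : ∀ i, i₀ ≤ i)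
    {g : κ.ord.ToType → G} (hg : Function.Surjective g)
    (hx : ∀ α, i₀ < α →
      IsSpecialExtension (fun β : Set.Iio α => g β) (fun β => x β) (x i₀) (x α)) :
    IsSpecialSeq G κ x i₀ := by
  have hlt : ∀ {α β}, β < α → i₀ < α := fun hβ => (hi₀ _).trans_lt hβ
  refine ⟨hi₀, ?_, g, hg, fun α β γ δ hβ hγ hδ => ?_⟩
  · refine Function.Injective.of_lt_imp_ne fun β α hβ => Ne.symm ?_
    obtain ⟨hαx₀, -, -, hαv⟩ := hx α (hlt hβ)
    by_cases hβx₀ : x i₀ = x β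
    · exact hβx₀ ▸ hαx₀
    · exact hαv ⟨β, hβ⟩ hβx₀
  · obtain ⟨-, h₁, h₂, -⟩ := hx α (hlt hβ)
    exact ⟨h₁ ⟨β, hβ⟩ ⟨γ, hγ⟩, h₂ ⟨β, hβ⟩ ⟨γ, hγ⟩ ⟨δ, hδ⟩⟩

/-- Let `G` be a monoid acting on a set `X`, `x₀ ∈ X`, and `κ` an infinite cardinal with
`|G| ≤ κ` such that every family `𝒰` of Zariski-open sets with `⋂ 𝒰 = {x₀}` has
cardinality at least `κ` (i.e. `κ ≤ ψ(x₀, ζ_G)`).  Then `X` contains a special sequence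
`(x_α)_{α<κ}` with first term `x₀`. -/
theorem exists_specialSeq_of_le_pseudocharacter {G X : Type u} [Monoid G] [MulAction G X]
    (x₀ : X) (κ : Cardinal.{u}) (hκ : ℵ₀ ≤ κ) (hG : #G ≤ κ)
    (hψ : ∀ 𝒰 : Set (Set X), (∀ U ∈ 𝒰, IsOpen[zariskiGTopology G X] U) →
      ⋂₀ 𝒰 = {x₀} → κ ≤ #𝒰) :
    ∃ (x : κ.ord.ToType → X) (i₀ : κ.ord.ToType),
      IsSpecialSeq G κ x i₀ ∧ x i₀ = x₀ := by
  have : Nonempty κ.ord.ToType := by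
    rw [← Cardinal.mk_ne_zero_iff, Cardinal.mk_ord_toType]
    exact (Cardinal.aleph0_pos.trans_le hκ).ne'
  obtain ⟨i₀, hi₀⟩ : ∃ i₀ : κ.ord.ToType, ∀ i, i₀ ≤ i :=
    ⟨wellFounded_lt.min Set.univ Set.univ_nonempty,
      fun i => wellFounded_lt.min_le (Set.mem_univ i)⟩
  obtain ⟨e⟩ : Nonempty (G ↪ κ.ord.ToType) := by
    rwa [← Cardinal.le_def, Cardinal.mk_ord_toType]
  obtain ⟨g, hg⟩ : ∃ g : κ.ord.ToType → G, Function.Surjective g :=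
    ⟨_, Function.invFun_surjective e.injective⟩
  obtain ⟨x, hx⟩ := exists_forall_Iio_rec (X := X)
    (P := fun α v y => (α = i₀ → y = x₀) ∧
      (i₀ < α → IsSpecialExtension (fun β : Set.Iio α => g β) v x₀ y)) fun α v => by
    by_cases hα : α = i₀
    · exact ⟨x₀, fun _ => rfl, fun h => (h.ne' hα).elim⟩
    · obtain ⟨y, hy⟩ := exists_isSpecialExtension hκ hψ
        (by simpa using Cardinal.mk_Iio_lt α) (fun β : Set.Iio α => g β) v
      exact ⟨y, fun h => absurd h hα, fun _ => hy⟩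
  have hx₀ : x i₀ = x₀ := (hx i₀).1 rfl
  exact ⟨x, i₀, isSpecialSeq_of_isSpecialExtension hi₀ hg fun α hα => hx₀ ▸ (hx α).2 hα, hx₀⟩
end

section
/- Let κ be an infinite cardinal, X a set, and (x_α)_{α<κ} an injective transfinite sequence in X. Let φ_0 be the filter on X generated by the sets {x_0}∪{x_β : α<β<κ} for α<κ. Then for every infinite cardinal λ ≤ cf(κ), the set of filters φ on X with φ ⊇ φ_0, ⋂φ = {x_0}, and ψ(φ) = λ has cardinality exactly 2^(2^κ). -/
open Cardinal Set Filter

universe u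

/-!
Every such filter contains the tail `{x i₀} ∪ x '' Ioi i₀`, a set of size at most `κ`, and a
filter containing a set `V` is determined by its restriction to `V`; this gives `≤ 2 ^ 2 ^ κ`.

For `≥`, label the indices `j < κ` by triples `(γ, F, 𝔉)`, with `γ` ranging over a set `M` of
size `μ`, `F` a finite set of indices and `𝔉` a finite family of finite sets of indices, so that
every label occurs cofinally often (there are only `κ` labels). For `𝒜 ⊆ 𝒫(κ)` let `φ(𝒜)` be
generated by the tails, the columns `{x i₀} ∪ {x j | γ_j ≠ γ}` and, for `B ∈ 𝒜`, the selectors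
`{x i₀} ∪ {x j | F_j ∩ B ∈ 𝔉_j}`. The `μ` columns already intersect in `{x i₀}`. Fewer than
`μ` generators have bounded tails (as `μ ≤ cf κ`) and miss some column `γ`, so they all contain
`x j` for any late enough `j` labelled `(γ, ∅, {∅})`; hence `ψ(φ(𝒜)) = μ`. If `B ∉ 𝒜`, finitely
many generators of `φ(𝒜)` also contain such an `x j` outside the selector of `B`: take `F`
separating `B` from the finitely many `B' ∈ 𝒜` involved and `𝔉` their traces on `F`. So
`𝒜 ↦ φ(𝒜)` is injective.
-/

theorem Cardinal.exists_subset_mk_le_image_eq {α β : Type u} (f : α → β) (s : Set α)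
    (t : Set β) : ∃ r ⊆ s, #r ≤ #t ∧ f '' r = t ∩ f '' s := by
  obtain ⟨r, hr, hbij⟩ := exists_subset_bijOn (s ∩ f ⁻¹' t) f
  have himage : f '' r = t ∩ f '' s := by
    rw [hbij.image_eq, image_inter_preimage, inter_comm]
  refine ⟨r, hr.trans inter_subset_left, ?_, himage⟩
  rw [← mk_image_eq_of_injOn f r hbij.injOn, himage]
  exact mk_le_mk_of_subset inter_subset_left

theorem Order.exists_forall_lt_of_mk_lt_cof {α : Type u} [LinearOrder α] {S : Set α}
    (hS : #S < Order.cof α) : ∃ b, ∀ s ∈ S, s < b := by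
  by_contra! h
  exact (Order.cof_le fun a => h a).not_gt hS

theorem Cardinal.mk_Iic_ord_toType_lt {κ : Cardinal.{u}} (hκ : ℵ₀ ≤ κ) (i : κ.ord.ToType) :
    #(Iic i) < κ := by
  rw [← Iio_insert]
  exact mk_insert_le.trans_lt <| add_lt_of_lt hκ (by simpa using mk_Iio_lt i)
    (one_lt_aleph0.trans_le hκ)

theorem Cardinal.exists_ord_toType_cofinal_fibers {κ : Cardinal.{u}} (hκ : ℵ₀ ≤ κ)
    {Λ : Type u} [Nonempty Λ] (hΛ : #Λ ≤ κ) :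
    ∃ f : κ.ord.ToType → Λ, ∀ l α, ∃ j, f j = l ∧ α < j := by
  have hcard : #(Λ × κ.ord.ToType) = #κ.ord.ToType := by
    rw [mk_prod, lift_id, lift_id, mk_ord_toType, mul_eq_right hκ hΛ (mk_ne_zero Λ)]
  obtain ⟨e⟩ := Cardinal.eq.1 hcard
  refine ⟨fun j => (e.symm j).1, fun l α => ?_⟩
  by_contra! h
  have hinj : Function.Injective fun k => (⟨e (l, k), h _ (by simp)⟩ : Iic α) :=
    fun k k' hkk' => by simpa using congrArg Subtype.val hkk'
  exact ((mk_le_of_injective hinj).trans_lt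
    ((mk_Iic_ord_toType_lt hκ α).trans_eq (mk_ord_toType κ).symm)).false

theorem Filter.mk_setOf_mem_le {X : Type u} (V : Set X) :
    #{φ : Filter X | V ∈ φ} ≤ (2 : Cardinal) ^ (2 : Cardinal) ^ #V := by
  rw [← mk_set, ← mk_set]
  refine mk_le_of_injective (f := fun φ => (comap ((↑) : V → X) φ.1).sets) fun φ ψ h => ?_
  have hrange (φ : {φ : Filter X | V ∈ φ}) : range ((↑) : V → X) ∈ φ.1 := by
    rw [Subtype.range_coe]; exact φ.2
  rw [Subtype.ext_iff, ← map_comap_of_mem (hrange φ), ← map_comap_of_mem (hrange ψ),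
    Filter.ext_iff.2 (Set.ext_iff.1 h)]

noncomputable def Filter.pseudocharacter {X : Type u} (φ : Filter X) : Cardinal.{u} :=
  sInf {c : Cardinal.{u} | ∃ 𝓕 : Set (Set X), 𝓕 ⊆ φ.sets ∧ ⋂₀ 𝓕 = ⋂₀ φ.sets ∧ #𝓕 = c}

theorem Filter.pseudocharacter_eq {X : Type u} {φ : Filter X} {c : Cardinal.{u}}
    {𝓕₀ : Set (Set X)} (h𝓕₀ : 𝓕₀ ⊆ φ.sets) (hinter : ⋂₀ 𝓕₀ = ⋂₀ φ.sets) (hcard : #𝓕₀ ≤ c)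
    (hmin : ∀ 𝓕 ⊆ φ.sets, ⋂₀ 𝓕 = ⋂₀ φ.sets → c ≤ #𝓕) : φ.pseudocharacter = c := by
  have hmem : #𝓕₀ ∈ {c : Cardinal.{u} | ∃ 𝓕 : Set (Set X),
      𝓕 ⊆ φ.sets ∧ ⋂₀ 𝓕 = ⋂₀ φ.sets ∧ #𝓕 = c} := ⟨𝓕₀, h𝓕₀, hinter, rfl⟩
  refine le_antisymm ((csInf_le' hmem).trans hcard) (le_csInf ⟨_, hmem⟩ ?_)
  rintro _ ⟨𝓕, h𝓕, h𝓕inter, rfl⟩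
  exact hmin 𝓕 h𝓕 h𝓕inter

theorem Filter.le_mk_of_sInter_subset {X : Type u} {g : Set (Set X)} {s : Set X}
    {κ : Cardinal.{u}} (hκ : ℵ₀ ≤ κ) (hg : ∀ Q ⊆ g, #Q < κ → ¬ ⋂₀ Q ⊆ s)
    {𝓕 : Set (Set X)} (h𝓕 : 𝓕 ⊆ (generate g).sets) (hs : ⋂₀ 𝓕 ⊆ s) : κ ≤ #𝓕 := by
  by_contra! hlt
  choose t htg htfin hts using fun F : 𝓕 => mem_generate_iff.1 (h𝓕 F.2)
  have hQ : #(⋃ F, t F) < κ := by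
    rcases lt_or_ge #𝓕 ℵ₀ with hfin | hinf
    · have : Finite 𝓕 := lt_aleph0_iff_finite.1 hfin
      exact (finite_iUnion htfin).lt_aleph0.trans_le hκ
    · calc #(⋃ F, t F) ≤ #𝓕 * ℵ₀ :=
            (mk_iUnion_le _).trans (mul_le_mul' le_rfl (ciSup_le' fun F => (htfin F).lt_aleph0.le))
        _ = #𝓕 := mul_eq_left hinf hinf aleph0_ne_zero
        _ < κ := hlt
  refine hg _ (iUnion_subset htg) hQ fun y hy => hs fun F hF => hts ⟨F, hF⟩ fun G hG => ?_
  exact hy G (mem_iUnion.2 ⟨⟨F, hF⟩, hG⟩)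

open Classical in
noncomputable def Finset.trace {α : Type*} (F : Finset α) (B : Set α) : Finset α :=
  F.filter (· ∈ B)

theorem Finset.mem_trace {α : Type*} {F : Finset α} {B : Set α} {i : α} :
    i ∈ F.trace B ↔ i ∈ F ∧ i ∈ B := by
  classical
  simp [trace]

theorem Finset.exists_trace_ne {α : Type*} {𝒮 : Set (Set α)} (h𝒮 : 𝒮.Finite) {B : Set α}
    (hB : B ∉ 𝒮) : ∃ F : Finset α, ∀ B' ∈ 𝒮, F.trace B' ≠ F.trace B := by
  have hdiff (B' : 𝒮) : ∃ i, ¬(i ∈ (B' : Set α) ↔ i ∈ B) := by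
    by_contra! h
    exact hB (Set.ext h ▸ B'.2)
  choose d hd using hdiff
  have : Finite 𝒮 := h𝒮
  refine ⟨(finite_range d).toFinset, fun B' hB' htrace => hd ⟨B', hB'⟩ ?_⟩
  have hdF : d ⟨B', hB'⟩ ∈ (finite_range d).toFinset := by simp
  have := congrArg (d ⟨B', hB'⟩ ∈ ·) htrace
  simpa [mem_trace, hdF] using this

namespace CodedFilter

variable {X I M : Type u} (x : I → X) (i₀ : I) (dec : I → M × Finset I × Finset (Finset I))

def tail [Preorder I] (α : I) : Set X := insert (x i₀) (x '' Ioi α)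

def column (γ : M) : Set X := insert (x i₀) (x '' {j | (dec j).1 ≠ γ})

def selector (B : Set I) : Set X :=
  insert (x i₀) (x '' {j | (dec j).2.1.trace B ∈ (dec j).2.2})

def gens [Preorder I] (A : Set I) (C : Set M) (𝒮 : Set (Set I)) : Set (Set X) :=
  tail x i₀ '' A ∪ column x i₀ dec '' C ∪ selector x i₀ dec '' 𝒮

def codedFilter [Preorder I] (𝒜 : Set (Set I)) : Filter X :=
  generate (gens x i₀ dec univ univ 𝒜)

variable {x i₀ dec}

theorem sInter_range_column [Nonempty M] (hx : Function.Injective x) :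
    ⋂₀ range (column x i₀ dec) = {x i₀} := by
  refine Subset.antisymm (fun y hy => ?_) (fun y hy => ?_)
  · obtain (rfl | ⟨j, -, rfl⟩) := hy _ ⟨Classical.arbitrary M, rfl⟩
    · rfl
    obtain (h | ⟨k, hk, hkj⟩) := hy _ ⟨(dec j).1, rfl⟩
    · exact h
    · exact ((hx hkj ▸ hk) rfl).elim
  · rintro _ ⟨γ, rfl⟩
    exact hy ▸ mem_insert _ _

variable [Preorder I]

theorem mk_tail_le (α : I) : #(tail x i₀ α) ≤ #I :=
  (mk_le_mk_of_subset (insert_subset (mem_range_self i₀) (image_subset_range _ _))).trans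
    mk_range_le

theorem x_i₀_mem_of_mem_gens {A : Set I} {C : Set M} {𝒮 : Set (Set I)} {G : Set X}
    (hG : G ∈ gens x i₀ dec A C 𝒮) : x i₀ ∈ G := by
  rcases hG with (⟨α, -, rfl⟩ | ⟨γ, -, rfl⟩) | ⟨B, -, rfl⟩ <;> exact mem_insert _ _

theorem mem_sInter_gens {A : Set I} {C : Set M} {𝒮 : Set (Set I)} {j : I}
    (hA : ∀ α ∈ A, α < j) (hC : (dec j).1 ∉ C)
    (h𝒮 : ∀ B ∈ 𝒮, (dec j).2.1.trace B ∈ (dec j).2.2) :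
    x j ∈ ⋂₀ gens x i₀ dec A C 𝒮 := by
  rintro _ ((⟨α, hα, rfl⟩ | ⟨γ, hγ, rfl⟩) | ⟨B, hB, rfl⟩) <;>
    refine mem_insert_of_mem _ ⟨j, ?_, rfl⟩
  · exact hA α hα
  · exact fun h => hC (h ▸ hγ)
  · exact h𝒮 B hB

theorem exists_subset_gens {𝒜 : Set (Set I)} {Q : Set (Set X)}
    (hQ : Q ⊆ gens x i₀ dec univ univ 𝒜) :
    ∃ (A : Set I) (C : Set M) (𝒮 : Set (Set I)),
      #A ≤ #Q ∧ #C ≤ #Q ∧ #𝒮 ≤ #Q ∧ 𝒮 ⊆ 𝒜 ∧ Q ⊆ gens x i₀ dec A C 𝒮 := by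
  obtain ⟨A, -, hA, hAQ⟩ := exists_subset_mk_le_image_eq (tail x i₀) univ Q
  obtain ⟨C, -, hC, hCQ⟩ := exists_subset_mk_le_image_eq (column x i₀ dec) univ Q
  obtain ⟨𝒮, h𝒮𝒜, h𝒮, h𝒮Q⟩ := exists_subset_mk_le_image_eq (selector x i₀ dec) 𝒜 Q
  refine ⟨A, C, 𝒮, hA, hC, h𝒮, h𝒮𝒜, fun G hG => ?_⟩
  rw [gens, hAQ, hCQ, h𝒮Q]
  rcases hQ hG with (h | h) | h
  · exact Or.inl (Or.inl ⟨hG, h⟩)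
  · exact Or.inl (Or.inr ⟨hG, h⟩)
  · exact Or.inr ⟨hG, h⟩

theorem column_mem_codedFilter (𝒜 : Set (Set I)) (γ : M) :
    column x i₀ dec γ ∈ codedFilter x i₀ dec 𝒜 :=
  mem_generate_of_mem (Or.inl (Or.inr ⟨γ, trivial, rfl⟩))

variable (hx : Function.Injective x)

theorem codedFilter_le (𝒜 : Set (Set I)) :
    codedFilter x i₀ dec 𝒜 ≤ generate {S | ∃ α, S = tail x i₀ α} := by
  rw [le_generate_iff]
  rintro _ ⟨α, rfl⟩
  exact mem_generate_of_mem (Or.inl (Or.inl ⟨α, trivial, rfl⟩))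

theorem mk_setOf_le_generate_tail_le (i₀ : I) :
    #{φ : Filter X | φ ≤ generate {S | ∃ α, S = tail x i₀ α}} ≤
      (2 : Cardinal) ^ (2 : Cardinal) ^ #I :=
  calc #{φ : Filter X | φ ≤ generate {S | ∃ α, S = tail x i₀ α}}
    _ ≤ #{φ : Filter X | tail x i₀ i₀ ∈ φ} :=
        mk_le_mk_of_subset fun _ hφ => hφ (mem_generate_of_mem ⟨i₀, rfl⟩)
    _ ≤ _ := mk_setOf_mem_le _
    _ ≤ _ := power_le_power_left two_ne_zero (power_le_power_left two_ne_zero (mk_tail_le i₀))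

include hx in
theorem sInter_codedFilter [Nonempty M] (𝒜 : Set (Set I)) :
    ⋂₀ (codedFilter x i₀ dec 𝒜).sets = {x i₀} := by
  refine Subset.antisymm ?_ fun y hy => ?_
  · rw [← sInter_range_column (i₀ := i₀) (dec := dec) hx]
    exact sInter_subset_sInter fun _ ⟨γ, hγ⟩ => hγ ▸ column_mem_codedFilter 𝒜 γ
  · have : pure (x i₀) ≤ codedFilter x i₀ dec 𝒜 :=
      le_generate_iff.2 fun G hG => mem_pure.2 (x_i₀_mem_of_mem_gens hG)
    exact hy ▸ fun s hs => this hs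

variable [Infinite M] (hdec : ∀ l α, ∃ j, dec j = l ∧ α < j)
  (hbdd : ∀ S : Set I, #S < #M → ∃ b, ∀ s ∈ S, s < b)

include hdec hbdd in
theorem exists_mem_sInter_gens {A : Set I} {C : Set M} {𝒮 : Set (Set I)} (hA : #A < #M)
    (hC : #C < #M) (F : Finset I) (𝔉 : Finset (Finset I)) (h𝒮 : ∀ B ∈ 𝒮, F.trace B ∈ 𝔉) :
    ∃ j, j ≠ i₀ ∧ (dec j).2 = (F, 𝔉) ∧ x j ∈ ⋂₀ gens x i₀ dec A C 𝒮 := by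
  obtain ⟨b, hb⟩ := hbdd (insert i₀ A) <| mk_insert_le.trans_lt <|
    add_lt_of_lt (aleph0_le_mk M) hA (one_lt_aleph0.trans_le (aleph0_le_mk M))
  obtain ⟨γ, hγ⟩ : ∃ γ, γ ∉ C := by
    by_contra! h
    exact hC.ne (by rw [eq_univ_of_forall h, mk_univ])
  obtain ⟨j, hj, hbj⟩ := hdec (γ, F, 𝔉) b
  have hlt : ∀ α ∈ insert i₀ A, α < j := fun α hα => (hb α hα).trans hbj
  refine ⟨j, (hlt i₀ (mem_insert _ _)).ne', by rw [hj], mem_sInter_gens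
    (fun α hα => hlt α (mem_insert_of_mem _ hα)) (by rwa [hj]) (by rwa [hj])⟩

include hx hdec hbdd in
theorem pseudocharacter_codedFilter (𝒜 : Set (Set I)) :
    (codedFilter x i₀ dec 𝒜).pseudocharacter = #M := by
  have hsets : range (column x i₀ dec) ⊆ (codedFilter x i₀ dec 𝒜).sets :=
    fun _ ⟨γ, hγ⟩ => hγ ▸ column_mem_codedFilter 𝒜 γ
  refine pseudocharacter_eq hsets ((sInter_range_column hx).trans (sInter_codedFilter hx 𝒜).symm)
    mk_range_le fun 𝓕 h𝓕 hinter => ?_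
  refine le_mk_of_sInter_subset (aleph0_le_mk M) (fun Q hQ hQM hQx => ?_) h𝓕
    (hinter.trans (sInter_codedFilter hx 𝒜)).le
  obtain ⟨A, C, 𝒮, hA, hC, -, -, hQgens⟩ := exists_subset_gens hQ
  obtain ⟨j, hji₀, -, hj⟩ := exists_mem_sInter_gens hdec hbdd (hA.trans_lt hQM)
    (hC.trans_lt hQM) ∅ {∅} fun B _ => by simp [Finset.trace]
  exact hji₀ (hx (hQx (sInter_subset_sInter hQgens hj)))

include hx hdec hbdd in
theorem selector_notMem_codedFilter {𝒜 : Set (Set I)} {B : Set I} (hB : B ∉ 𝒜) :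
    selector x i₀ dec B ∉ codedFilter x i₀ dec 𝒜 := by
  classical
  intro hmem
  obtain ⟨t, htgens, htfin, htB⟩ := mem_generate_iff.1 hmem
  obtain ⟨A, C, 𝒮, hA, hC, h𝒮, h𝒮𝒜, htgens'⟩ := exists_subset_gens htgens
  have ht : #t < #M := htfin.lt_aleph0.trans_le (aleph0_le_mk M)
  have h𝒮fin : 𝒮.Finite := lt_aleph0_iff_set_finite.1 (h𝒮.trans_lt htfin.lt_aleph0)
  obtain ⟨F, hF⟩ := Finset.exists_trace_ne h𝒮fin fun h => hB (h𝒮𝒜 h)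
  obtain ⟨j, hji₀, hj, hjt⟩ := exists_mem_sInter_gens hdec hbdd (hA.trans_lt ht)
    (hC.trans_lt ht) F (h𝒮fin.toFinset.image F.trace)
    fun B' hB' => Finset.mem_image_of_mem _ (h𝒮fin.mem_toFinset.2 hB')
  obtain (h | ⟨k, hk, hkj⟩) := htB (sInter_subset_sInter htgens' hjt)
  · exact hji₀ (hx h)
  replace hk : (dec j).2.1.trace B ∈ (dec j).2.2 := hx hkj ▸ hk
  rw [hj] at hk
  obtain ⟨B', hB', htrace⟩ := Finset.mem_image.1 hk
  exact hF B' (h𝒮fin.mem_toFinset.1 hB') htrace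

include hx hdec hbdd in
theorem codedFilter_injective : Function.Injective (codedFilter x i₀ dec) := by
  have hsub {𝒜 𝒜' : Set (Set I)} (h : codedFilter x i₀ dec 𝒜 = codedFilter x i₀ dec 𝒜') :
      𝒜 ⊆ 𝒜' := fun B hB => by
    by_contra hB'
    refine selector_notMem_codedFilter (i₀ := i₀) hx hdec hbdd hB' ?_
    exact h ▸ mem_generate_of_mem (Or.inr ⟨B, hB, rfl⟩)
  exact fun 𝒜 𝒜' h => (hsub h).antisymm (hsub h.symm)

end CodedFilter

open CodedFilter

theorem card_filters_with_pseudocharacter_general {X : Type u} (κ : Cardinal.{u}) (hκ : ℵ₀ ≤ κ)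
    (x : κ.ord.ToType → X) (hinj : Function.Injective x)
    (i₀ : κ.ord.ToType)
    (μ : Cardinal.{u}) (hμ : ℵ₀ ≤ μ) (hμcf : μ ≤ κ.ord.cof) :
    #{φ : Filter X |
        φ ≤ Filter.generate {S : Set X | ∃ α : κ.ord.ToType, S = insert (x i₀) (x '' Set.Ioi α)} ∧
        ⋂₀ φ.sets = {x i₀} ∧
        sInf {c : Cardinal.{u} | ∃ 𝓕 : Set (Set X),
          𝓕 ⊆ φ.sets ∧ ⋂₀ 𝓕 = ⋂₀ φ.sets ∧ #𝓕 = c} = μ} =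
      (2 : Cardinal.{u}) ^ ((2 : Cardinal.{u}) ^ κ) := by
  have : Infinite κ.ord.ToType := infinite_iff.2 (by rwa [mk_ord_toType])
  have : Infinite μ.out := infinite_iff.2 (by rwa [mk_out])
  obtain ⟨dec, hdec⟩ := exists_ord_toType_cofinal_fibers hκ
    (Λ := μ.out × Finset κ.ord.ToType × Finset (Finset κ.ord.ToType)) <| by
      simp only [mk_prod, lift_id, mk_finset_of_infinite, mk_out, mk_ord_toType]
      exact mul_le_of_le hκ (hμcf.trans (Ordinal.cof_ord_le κ)) (mul_le_of_le hκ le_rfl le_rfl)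
  have hbdd (S : Set κ.ord.ToType) (hS : #S < #μ.out) : ∃ b, ∀ s ∈ S, s < b := by
    rw [mk_out] at hS
    exact Order.exists_forall_lt_of_mk_lt_cof (hS.trans_le (Ordinal.cof_toType _ ▸ hμcf))
  refine le_antisymm ?_ ?_
  · calc _ ≤ #{φ : Filter X | φ ≤ generate {S | ∃ α, S = tail x i₀ α}} :=
          mk_le_mk_of_subset fun _ hφ => hφ.1
      _ ≤ _ := (mk_setOf_le_generate_tail_le i₀).trans_eq (by rw [mk_ord_toType])
  · calc (2 : Cardinal) ^ (2 : Cardinal) ^ κ = #(Set (Set κ.ord.ToType)) := by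
          rw [mk_set, mk_set, mk_ord_toType]
      _ ≤ _ := mk_le_of_injective (f := fun 𝒜 => ⟨codedFilter x i₀ dec 𝒜, codedFilter_le 𝒜,
          sInter_codedFilter hinj 𝒜,
          (pseudocharacter_codedFilter hinj hdec hbdd 𝒜).trans (mk_out μ)⟩)
          fun _ _ h => codedFilter_injective hinj hdec hbdd (congrArg Subtype.val h)

/-- Let `κ` be an infinite cardinal, `X` a set, and `(x_α)_{α<κ}` an injective transfinite
sequence in `X` (with least index `i₀`).  Let `φ₀` be the filter on `X` generated by the
sets `{x_{i₀}} ∪ {x_β : α < β < κ}` for `α < κ`.  Then for every infinite cardinal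
`μ ≤ cf(κ)`, the set of filters `φ` on `X` with `φ ⊇ φ₀`, `⋂ φ = {x_{i₀}}` and
pseudocharacter `ψ(φ) = μ` has cardinality exactly `2^(2^κ)`. -/
theorem card_filters_with_pseudocharacter {X : Type u} (κ : Cardinal.{u}) (hκ : ℵ₀ ≤ κ)
    (x : κ.ord.ToType → X) (hinj : Function.Injective x)
    (i₀ : κ.ord.ToType) (hi₀ : ∀ i, i₀ ≤ i)
    (μ : Cardinal.{u}) (hμ : ℵ₀ ≤ μ) (hμcf : μ ≤ κ.ord.cof) :
    #{φ : Filter X |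
        φ ≤ Filter.generate {S : Set X | ∃ α : κ.ord.ToType, S = insert (x i₀) (x '' Set.Ioi α)} ∧
        ⋂₀ φ.sets = {x i₀} ∧
        sInf {c : Cardinal.{u} | ∃ 𝓕 : Set (Set X),
          𝓕 ⊆ φ.sets ∧ ⋂₀ 𝓕 = ⋂₀ φ.sets ∧ #𝓕 = c} = μ} =
      (2 : Cardinal.{u}) ^ ((2 : Cardinal.{u}) ^ κ) :=
  card_filters_with_pseudocharacter_general κ hκ x hinj i₀ μ hμ hμcf
end
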